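/- arXiv:2604.14937 — 3 statements merged into one kernel-verified Lean document; each statement's English description precedes it below -/
import Mathlib

section
/- The unitary antipode R := S ∘ τ_{i/2} ∘ ϑ satisfies: R is ℂ-linear with R(1) = 1; R is anti-multiplicative, i.e. R(ab) = R(b)R(a) for all a, b ∈ 𝒜; R is star-preserving, i.e. R(a*) = R(a)* for all a ∈ 𝒜; R(α) = α*, R(α*) = α, R(γ) = −ζ^{1/2}·(conj(q)/|q|)·γ, R(γ*) = −ζ^{1/2}·(conj(q)/|q|)·γ*; R ∘ R = id on 𝒜; and h(R(a)) = h(a) for all a ∈ 𝒜. -/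
/-
The scalar `c p = ζ^{p²/2} |q|^{-p}` by which `R` differs from `S` on `𝒜_p` satisfies
`c (p + r) = c p * c r * ζ^{pr}`, which exactly cancels the braiding factor `ζ^{-pr}` in
`S (x y) = ζ^{-pr} S y S x`; so `R` is anti-multiplicative on homogeneous elements, hence
everywhere once `𝒜_p 𝒜_r ⊆ 𝒜_{p+r}` is known (checked on basis monomials times
generators, using the relations). On generators `R` swaps `α` and `α*` and multiplies `γ`,
`γ*` by the same phase `λ` with `λ² = 1`; as `R ∘ R` and `x ↦ R (x*)*` are again unital
and (anti-)multiplicative, they agree with `id` and `R` because they do so on generators.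
For the Haar functional, `𝒜` is graded by (`α`-degree, `γ`-degree) ∈ `ℤ²`: `h` vanishes
off degree `(0, 0)`, `R` maps degree `(n, p)` to `(-n, p)`, and on degree `(0, 0)`,
spanned by the `γ^m γ*^m`, `R` is the identity.
-/

open scoped TensorProduct

noncomputable section

/-- The monomial family `α^n γ^m (γ*)^k` (for `n ≥ 0`) resp. `(α*)^{-n} γ^m (γ*)^k`
(for `n < 0`), indexed by `(n, m, k) ∈ ℤ × ℕ × ℕ`. -/
def suqMono {A : Type*} [Ring A] [StarRing A] (a g : A) (i : ℤ × ℕ × ℕ) : A :=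
  (if 0 ≤ i.1 then a ^ i.1.toNat else (star a) ^ (-i.1).toNat) * g ^ i.2.1 * (star g) ^ i.2.2

/-- The degree-`p` homogeneous component `𝒜_p`: the `ℂ`-span of the basis monomials with
`m - k = p`. -/
def suqHomog {A : Type*} [Ring A] [Algebra ℂ A] [StarRing A] (a g : A) (p : ℤ) :
    Submodule ℂ A :=
  Submodule.span ℂ
    {x | ∃ i : ℤ × ℕ × ℕ, (i.2.1 : ℤ) - (i.2.2 : ℤ) = p ∧ x = suqMono a g i}

/-- The defining relations of `Pol(SU_q(2))`. -/
def SUqRel {A : Type*} [Ring A] [Algebra ℂ A] [StarRing A] (q : ℂ) (a g : A) : Prop :=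
  star a * a + star g * g = 1 ∧
  a * star a + ((‖q‖ : ℂ) ^ 2) • (star g * g) = 1 ∧
  g * star g = star g * g ∧
  a * g = (starRingEnd ℂ q) • (g * a) ∧
  a * star g = q • (star g * a)

/-- The monomials form a `ℂ`-basis. -/
def SUqBasis {A : Type*} [Ring A] [Algebra ℂ A] [StarRing A] (a g : A) : Prop :=
  LinearIndependent ℂ (suqMono a g) ∧
  Submodule.span ℂ (Set.range (suqMono a g)) = ⊤

/-- The characterizing properties of the antipode `S`. -/
def SUqAntipode {A : Type*} [Ring A] [Algebra ℂ A] [StarRing A] (q : ℂ) (a g : A)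
    (S : A →ₗ[ℂ] A) : Prop :=
  S 1 = 1 ∧ S a = star a ∧ S (star a) = a ∧
  S g = (-(starRingEnd ℂ q)) • g ∧ S (star g) = (-q⁻¹) • star g ∧
  (∀ p : ℤ, ∀ x ∈ suqHomog a g p, S x ∈ suqHomog a g p) ∧
  (∀ p r : ℤ, ∀ x ∈ suqHomog a g p, ∀ y ∈ suqHomog a g r,
    S (x * y) = ((q / starRingEnd ℂ q) ^ (-(p * r))) • (S y * S x))

/-- The braided multiplication on `𝒜 ⊗ 𝒜`. -/
def SUqBraidedMul {A : Type*} [Ring A] [Algebra ℂ A] [StarRing A] (q : ℂ) (a g : A)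
    (μ : A ⊗[ℂ] A →ₗ[ℂ] A ⊗[ℂ] A →ₗ[ℂ] A ⊗[ℂ] A) : Prop :=
  ∀ (x w : A) (r s : ℤ), ∀ y ∈ suqHomog a g r, ∀ z ∈ suqHomog a g s,
    μ (x ⊗ₜ[ℂ] y) (z ⊗ₜ[ℂ] w)
      = ((q / starRingEnd ℂ q) ^ (-(r * s))) • ((x * z) ⊗ₜ[ℂ] (y * w))

/-- The characterizing properties of the comultiplication `Δ` (as a unital algebra
homomorphism into the braided tensor square with multiplication `μ`). -/
def SUqComul {A : Type*} [Ring A] [Algebra ℂ A] [StarRing A] (q : ℂ) (a g : A)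
    (μ : A ⊗[ℂ] A →ₗ[ℂ] A ⊗[ℂ] A →ₗ[ℂ] A ⊗[ℂ] A) (Δ : A →ₗ[ℂ] A ⊗[ℂ] A) : Prop :=
  Δ 1 = 1 ⊗ₜ[ℂ] 1 ∧ (∀ x y : A, Δ (x * y) = μ (Δ x) (Δ y)) ∧
  Δ a = a ⊗ₜ[ℂ] a - q • ((star g) ⊗ₜ[ℂ] g) ∧
  Δ g = g ⊗ₜ[ℂ] a + (star a) ⊗ₜ[ℂ] g ∧
  Δ (star a) = (star a) ⊗ₜ[ℂ] (star a) - q • (g ⊗ₜ[ℂ] (star g)) ∧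
  Δ (star g) = (star g) ⊗ₜ[ℂ] (star a) + a ⊗ₜ[ℂ] (star g)

/-- The braided flip `c` on `𝒜 ⊗ 𝒜`. -/
def SUqFlip {A : Type*} [Ring A] [Algebra ℂ A] [StarRing A] (q : ℂ) (a g : A)
    (c : A ⊗[ℂ] A →ₗ[ℂ] A ⊗[ℂ] A) : Prop :=
  ∀ (p r : ℤ), ∀ x ∈ suqHomog a g p, ∀ y ∈ suqHomog a g r,
    c (x ⊗ₜ[ℂ] y) = ((q / starRingEnd ℂ q) ^ (-(p * r))) • (y ⊗ₜ[ℂ] x)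

/-- The Haar functional, defined on the basis. -/
def SUqHaar {A : Type*} [Ring A] [Algebra ℂ A] [StarRing A] (q : ℂ) (a g : A)
    (h : A →ₗ[ℂ] ℂ) : Prop :=
  ∀ i : ℤ × ℕ × ℕ, h (suqMono a g i) =
    if i.1 = 0 ∧ i.2.1 = i.2.2
    then (1 - (‖q‖ : ℂ) ^ 2) / (1 - (‖q‖ : ℂ) ^ (2 * (i.2.1 + 1)))
    else 0

/-- The unitary antipode `R = S ∘ τ_{i/2} ∘ ϑ`, i.e. `R(x) = ζ^{p²/2}·|q|^{-p}·S(x)` for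
`x ∈ 𝒜_p` (principal branch `ζ^z = exp(z·Log ζ)`). -/
def SUqUnitaryAntipode {A : Type*} [Ring A] [Algebra ℂ A] [StarRing A] (q : ℂ) (a g : A)
    (S : A →ₗ[ℂ] A) (R : A →ₗ[ℂ] A) : Prop :=
  ∀ (p : ℤ), ∀ x ∈ suqHomog a g p,
    R x = (Complex.exp (((p : ℂ) ^ 2 / 2) * Complex.log (q / starRingEnd ℂ q)) *
      ((‖q‖ : ℂ) ^ (-p))) • S x


section Commutation

variable {K A : Type*} [CommSemiring K] [Semiring A] [Algebra K A]

theorem pow_mul_eq_smul_mul_pow {x y : A} {c : K} (h : x * y = c • (y * x)) (m : ℕ) :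
    x ^ m * y = c ^ m • (y * x ^ m) := by
  induction m with
  | zero => simp
  | succ m ih =>
    rw [pow_succ, mul_assoc, h, mul_smul_comm, ← mul_assoc, ih, smul_mul_assoc, smul_smul,
      mul_assoc, ← pow_succ, ← pow_succ']

theorem pow_mul_pow_mul_eq_smul {x z y : A} {c d : K} (hx : x * y = c • (y * x))
    (hz : z * y = d • (y * z)) (m k : ℕ) :
    x ^ m * z ^ k * y = (c ^ m * d ^ k) • (y * (x ^ m * z ^ k)) := by
  rw [mul_assoc, pow_mul_eq_smul_mul_pow hz, mul_smul_comm, ← mul_assoc,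
    pow_mul_eq_smul_mul_pow hx, smul_mul_assoc, smul_smul, mul_assoc, mul_comm (c ^ m)]

end Commutation

theorem map_pow_of_antimul {A : Type*} [Monoid A] {R : A → A} (hR1 : R 1 = 1)
    (hR : ∀ x y, R (x * y) = R y * R x) (x : A) (m : ℕ) : R (x ^ m) = R x ^ m := by
  induction m with
  | zero => simpa using hR1
  | succ m ih => rw [pow_succ, hR, ih, pow_succ']

def unitaryAntipodeCoeff (q : ℂ) (p : ℤ) : ℂ :=
  Complex.exp (((p : ℂ) ^ 2 / 2) * Complex.log (q / starRingEnd ℂ q)) * ((‖q‖ : ℂ) ^ (-p))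

def suqGammaPhase (q : ℂ) : ℂ :=
  -(Complex.exp ((1 / 2 : ℂ) * Complex.log (q / starRingEnd ℂ q)) *
    (starRingEnd ℂ q / (‖q‖ : ℂ)))

section Scalars

variable {q : ℂ}

theorem unitaryAntipodeCoeff_zero : unitaryAntipodeCoeff q 0 = 1 := by
  simp [unitaryAntipodeCoeff]

theorem unitaryAntipodeCoeff_one_mul :
    unitaryAntipodeCoeff q 1 * -(starRingEnd ℂ q) = suqGammaPhase q := by
  simp only [unitaryAntipodeCoeff, suqGammaPhase, Int.cast_one, zpow_neg, zpow_one]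
  rw [show (1 : ℂ) ^ 2 / 2 = 1 / 2 by norm_num]
  ring

variable (hq : q ≠ 0)
include hq

theorem unitaryAntipodeCoeff_add (p r : ℤ) :
    unitaryAntipodeCoeff q (p + r) =
      unitaryAntipodeCoeff q p * unitaryAntipodeCoeff q r * (q / starRingEnd ℂ q) ^ (p * r) := by
  have hζ : q / starRingEnd ℂ q ≠ 0 := div_ne_zero hq (by simpa using hq)
  have hnorm : (‖q‖ : ℂ) ≠ 0 := by simpa using hq
  have hexp : ((p + r : ℤ) : ℂ) ^ 2 / 2 * Complex.log (q / starRingEnd ℂ q) =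
      (p : ℂ) ^ 2 / 2 * Complex.log (q / starRingEnd ℂ q) +
        (r : ℂ) ^ 2 / 2 * Complex.log (q / starRingEnd ℂ q) +
        ((p * r : ℤ) : ℂ) * Complex.log (q / starRingEnd ℂ q) := by
    push_cast; ring
  rw [← Complex.exp_log hζ, ← Complex.exp_int_mul]
  simp only [unitaryAntipodeCoeff]
  rw [hexp, Complex.exp_add, Complex.exp_add, neg_add, zpow_add₀ hnorm]
  ring

theorem unitaryAntipodeCoeff_neg_one_mul :
    unitaryAntipodeCoeff q (-1) * -q⁻¹ = suqGammaPhase q := by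
  have hnorm : (‖q‖ : ℂ) ≠ 0 := by simpa using hq
  simp only [unitaryAntipodeCoeff, suqGammaPhase, neg_neg, zpow_one]
  rw [show ((-1 : ℤ) : ℂ) ^ 2 / 2 = 1 / 2 by norm_num]
  generalize Complex.exp _ = E
  field_simp
  linear_combination E * Complex.mul_conj' q

theorem suqGammaPhase_mul_self : suqGammaPhase q * suqGammaPhase q = 1 := by
  have hq' : starRingEnd ℂ q ≠ 0 := by simpa using hq
  have hnorm : (‖q‖ : ℂ) ≠ 0 := by simpa using hq
  have hexp : Complex.exp ((1 / 2 : ℂ) * Complex.log (q / starRingEnd ℂ q)) ^ 2 =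
      q / starRingEnd ℂ q := by
    rw [← Complex.exp_nat_mul, ← mul_assoc]
    norm_num [Complex.exp_log (div_ne_zero hq hq')]
  simp only [suqGammaPhase]
  generalize Complex.exp _ = E at hexp ⊢
  rw [eq_div_iff hq'] at hexp
  field_simp
  linear_combination (starRingEnd ℂ q) * hexp + Complex.mul_conj' q

theorem conj_suqGammaPhase : starRingEnd ℂ (suqGammaPhase q) = suqGammaPhase q := by
  rcases mul_self_eq_one_iff.mp (suqGammaPhase_mul_self hq) with h | h <;> simp [h]

end Scalars

section SUq

variable {A : Type*} [Ring A] [StarRing A]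

def suqAlphaPow (a : A) (n : ℤ) : A :=
  if 0 ≤ n then a ^ n.toNat else (star a) ^ (-n).toNat

theorem suqMono_eq (a g : A) (n : ℤ) (m k : ℕ) :
    suqMono a g (n, m, k) = suqAlphaPow a n * g ^ m * star g ^ k := rfl

theorem suqAlphaPow_zero (a : A) : suqAlphaPow a 0 = 1 := by simp [suqAlphaPow]

theorem suqAlphaPow_of_nonneg (a : A) {n : ℤ} (hn : 0 ≤ n) :
    suqAlphaPow a n = a ^ n.toNat := if_pos hn

theorem suqAlphaPow_of_nonpos (a : A) {n : ℤ} (hn : n ≤ 0) :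
    suqAlphaPow a n = star a ^ (-n).toNat := by
  obtain rfl | hn := hn.eq_or_lt
  · simp [suqAlphaPow]
  · exact if_neg hn.not_ge

theorem suqAlphaPow_add_one (a : A) {n : ℤ} (hn : 0 ≤ n) :
    suqAlphaPow a (n + 1) = suqAlphaPow a n * a := by
  rw [suqAlphaPow_of_nonneg a hn, suqAlphaPow_of_nonneg a (by omega),
    show (n + 1).toNat = n.toNat + 1 by omega, pow_succ]

theorem suqAlphaPow_sub_one (a : A) {n : ℤ} (hn : n ≤ 0) :
    suqAlphaPow a (n - 1) = suqAlphaPow a n * star a := by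
  rw [suqAlphaPow_of_nonpos a hn, suqAlphaPow_of_nonpos a (by omega),
    show (-(n - 1)).toNat = (-n).toNat + 1 by omega, pow_succ]

theorem map_suqAlphaPow_of_antimul {R : A → A} (hR1 : R 1 = 1)
    (hR : ∀ x y, R (x * y) = R y * R x) {a : A} (ha : R a = star a) (hsa : R (star a) = a)
    (n : ℤ) : R (suqAlphaPow a n) = suqAlphaPow a (-n) := by
  rcases le_total 0 n with hn | hn
  · rw [suqAlphaPow_of_nonneg a hn, map_pow_of_antimul hR1 hR, ha,
      suqAlphaPow_of_nonpos a (by omega), neg_neg]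
  · rw [suqAlphaPow_of_nonpos a hn, map_pow_of_antimul hR1 hR, hsa,
      suqAlphaPow_of_nonneg a (by omega)]

variable [Algebra ℂ A]

-- The relations are homogeneous for the `ℤ²`-grading by (`α`-degree, `γ`-degree), of which
-- `suqHomog` only records the second component.
def suqBihomog (a g : A) (n p : ℤ) : Submodule ℂ A :=
  Submodule.span ℂ {x | ∃ m k : ℕ, (m : ℤ) - k = p ∧ x = suqMono a g (n, m, k)}

variable {a g : A}

theorem suqMono_mem_suqBihomog {n p : ℤ} {m k : ℕ} (hp : (m : ℤ) - k = p) :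
    suqMono a g (n, m, k) ∈ suqBihomog a g n p :=
  Submodule.subset_span ⟨m, k, hp, rfl⟩

theorem suqBihomog_le_suqHomog (n p : ℤ) : suqBihomog a g n p ≤ suqHomog a g p :=
  Submodule.span_le.mpr fun _ ⟨m, k, hp, hx⟩ ↦ Submodule.subset_span ⟨(n, m, k), hp, hx⟩

theorem one_mem_suqBihomog : (1 : A) ∈ suqBihomog a g 0 0 := by
  simpa [suqMono_eq, suqAlphaPow_zero] using
    suqMono_mem_suqBihomog (a := a) (g := g) (n := 0) (m := 0) (k := 0) rfl

theorem mul_mem_suqBihomog_of_forall_suqMono {n p n' p' : ℤ} {y : A}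
    (h : ∀ m k : ℕ, (m : ℤ) - k = p → suqMono a g (n, m, k) * y ∈ suqBihomog a g n' p')
    {x : A} (hx : x ∈ suqBihomog a g n p) : x * y ∈ suqBihomog a g n' p' := by
  refine (Submodule.span_le (p := (suqBihomog a g n' p').comap (LinearMap.mulRight ℂ y))).mpr
    ?_ hx
  rintro _ ⟨m, k, hp, rfl⟩
  exact h m k hp

theorem mul_star_gamma_mem {n p : ℤ} {x : A} (hx : x ∈ suqBihomog a g n p) :
    x * star g ∈ suqBihomog a g n (p - 1) :=
  mul_mem_suqBihomog_of_forall_suqMono (fun m k hp ↦ by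
    rw [suqMono_eq, mul_assoc _ (star g ^ k), ← pow_succ, ← suqMono_eq]
    exact suqMono_mem_suqBihomog (by push_cast; omega)) hx

theorem mul_star_gamma_pow_mem {n p : ℤ} {x : A} (hx : x ∈ suqBihomog a g n p) (k : ℕ) :
    x * star g ^ k ∈ suqBihomog a g n (p - k) := by
  induction k with
  | zero => simpa using hx
  | succ k ih =>
    rw [pow_succ, ← mul_assoc, Nat.cast_succ, ← sub_sub]
    exact mul_star_gamma_mem ih

namespace SUqRel

variable {q : ℂ} (hrel : SUqRel q a g)
include hrel

theorem commute_gamma_star_gamma : Commute g (star g) := hrel.2.2.1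

theorem gamma_mul_alpha (hq : q ≠ 0) : g * a = (starRingEnd ℂ q)⁻¹ • (a * g) := by
  rw [hrel.2.2.2.1, smul_smul, inv_mul_cancel₀ (by simpa using hq), one_smul]

theorem star_gamma_mul_alpha (hq : q ≠ 0) : star g * a = q⁻¹ • (a * star g) := by
  rw [hrel.2.2.2.2, smul_smul, inv_mul_cancel₀ hq, one_smul]

theorem gamma_mul_star_alpha [StarModule ℂ A] :
    g * star a = starRingEnd ℂ q • (star a * g) := by
  simpa [star_smul] using congrArg star hrel.2.2.2.2

theorem star_gamma_mul_star_alpha [StarModule ℂ A] :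
    star g * star a = q • (star a * star g) := by
  simpa [star_smul] using congrArg star hrel.2.2.2.1

theorem suqMono_mul_gamma (n : ℤ) (m k : ℕ) :
    suqMono a g (n, m, k) * g = suqMono a g (n, m + 1, k) := by
  rw [suqMono_eq, suqMono_eq, mul_assoc, ← (hrel.commute_gamma_star_gamma.pow_right k).eq,
    ← mul_assoc, mul_assoc _ (g ^ m), ← pow_succ]

theorem mul_gamma_mem {n p : ℤ} {x : A} (hx : x ∈ suqBihomog a g n p) :
    x * g ∈ suqBihomog a g n (p + 1) :=
  mul_mem_suqBihomog_of_forall_suqMono (fun m k hp ↦ by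
    rw [hrel.suqMono_mul_gamma]; exact suqMono_mem_suqBihomog (by push_cast; omega)) hx

theorem mul_gamma_pow_mem {n p : ℤ} {x : A} (hx : x ∈ suqBihomog a g n p) (m : ℕ) :
    x * g ^ m ∈ suqBihomog a g n (p + m) := by
  induction m with
  | zero => simpa using hx
  | succ m ih =>
    rw [pow_succ, ← mul_assoc, Nat.cast_succ, ← add_assoc]
    exact hrel.mul_gamma_mem ih

-- Where `α*α` or `αα*` appears, the relations trade it for `1 - c • γ*γ`, of the same
-- bidegree.
theorem suqAlphaPow_mul_mem_suqBihomog {n : ℤ} {m k : ℕ} {c : ℂ} :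
    suqAlphaPow a n * (1 - c • (star g * g)) * (g ^ m * star g ^ k) ∈
      suqBihomog a g n (m - k) := by
  have hcomm := hrel.commute_gamma_star_gamma
  have hgg : star g * g * (g ^ m * star g ^ k) = g ^ (m + 1) * star g ^ (k + 1) := by
    rw [← hcomm.eq, mul_assoc, ← mul_assoc _ (g ^ m), ← (hcomm.pow_left m).eq, mul_assoc,
      ← pow_succ', ← mul_assoc, ← pow_succ']
  rw [mul_sub, mul_one, sub_mul, mul_smul_comm, smul_mul_assoc, mul_assoc _ (star g * g), hgg,
    ← mul_assoc, ← mul_assoc, ← suqMono_eq, ← suqMono_eq]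
  exact sub_mem (suqMono_mem_suqBihomog rfl)
    (Submodule.smul_mem _ _ (suqMono_mem_suqBihomog (by push_cast; ring)))

theorem mul_alpha_mem (hq : q ≠ 0) {n p : ℤ} {x : A} (hx : x ∈ suqBihomog a g n p) :
    x * a ∈ suqBihomog a g (n + 1) p := by
  refine mul_mem_suqBihomog_of_forall_suqMono (fun m k hp ↦ ?_) hx
  rw [suqMono_eq, mul_assoc _ (g ^ m), mul_assoc, pow_mul_pow_mul_eq_smul
    (hrel.gamma_mul_alpha hq) (hrel.star_gamma_mul_alpha hq), mul_smul_comm, ← mul_assoc,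
    ← hp]
  refine Submodule.smul_mem _ _ ?_
  rcases le_or_gt 0 n with hn | hn
  · rw [← suqAlphaPow_add_one a hn, ← mul_assoc, ← suqMono_eq]
    exact suqMono_mem_suqBihomog rfl
  · have hαα : star a * a = 1 - (1 : ℂ) • (star g * g) := by
      rw [one_smul, ← hrel.1, add_sub_cancel_right]
    rw [show n = n + 1 - 1 by ring, suqAlphaPow_sub_one a (by omega), sub_add_cancel,
      mul_assoc _ (star a), hαα]
    exact hrel.suqAlphaPow_mul_mem_suqBihomog

variable [StarModule ℂ A]

theorem mul_star_alpha_mem {n p : ℤ} {x : A} (hx : x ∈ suqBihomog a g n p) :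
    x * star a ∈ suqBihomog a g (n - 1) p := by
  refine mul_mem_suqBihomog_of_forall_suqMono (fun m k hp ↦ ?_) hx
  rw [suqMono_eq, mul_assoc _ (g ^ m), mul_assoc, pow_mul_pow_mul_eq_smul
    hrel.gamma_mul_star_alpha hrel.star_gamma_mul_star_alpha, mul_smul_comm, ← mul_assoc,
    ← hp]
  refine Submodule.smul_mem _ _ ?_
  rcases le_or_gt n 0 with hn | hn
  · rw [← suqAlphaPow_sub_one a hn, ← mul_assoc, ← suqMono_eq]
    exact suqMono_mem_suqBihomog rfl
  · have hαα : a * star a = 1 - ((‖q‖ : ℂ) ^ 2) • (star g * g) := by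
      rw [← hrel.2.1, add_sub_cancel_right]
    rw [show n = n - 1 + 1 by ring, suqAlphaPow_add_one a (by omega), add_sub_cancel_right,
      mul_assoc _ a, hαα]
    exact hrel.suqAlphaPow_mul_mem_suqBihomog

variable (hq : q ≠ 0)
include hq

theorem mul_suqAlphaPow_mem {n p : ℤ} {x : A} (hx : x ∈ suqBihomog a g n p) (j : ℤ) :
    x * suqAlphaPow a j ∈ suqBihomog a g (n + j) p := by
  induction j using Int.induction_on with
  | zero => simpa [suqAlphaPow_zero] using hx
  | succ j ih =>
    rw [suqAlphaPow_add_one a (by omega), ← mul_assoc, ← add_assoc]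
    exact hrel.mul_alpha_mem hq ih
  | pred j ih =>
    rw [suqAlphaPow_sub_one a (by omega), ← mul_assoc, ← add_sub_assoc]
    exact hrel.mul_star_alpha_mem ih

theorem mul_mem_suqBihomog {n p n' p' : ℤ} {x y : A} (hx : x ∈ suqBihomog a g n p)
    (hy : y ∈ suqBihomog a g n' p') : x * y ∈ suqBihomog a g (n + n') (p + p') := by
  refine (Submodule.span_le (p := (suqBihomog a g _ _).comap (LinearMap.mulLeft ℂ x))).mpr
    ?_ hy
  rintro _ ⟨m, k, rfl, rfl⟩
  rw [SetLike.mem_coe, Submodule.mem_comap, LinearMap.mulLeft_apply, suqMono_eq, ← mul_assoc,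
    ← mul_assoc, ← add_sub_assoc]
  exact mul_star_gamma_pow_mem (hrel.mul_gamma_pow_mem (hrel.mul_suqAlphaPow_mem hq hx n') m) k

theorem mul_mem_suqHomog {p r : ℤ} {x y : A} (hx : x ∈ suqHomog a g p)
    (hy : y ∈ suqHomog a g r) : x * y ∈ suqHomog a g (p + r) := by
  refine (Submodule.span_le (p := (suqHomog a g _).comap (LinearMap.mulRight ℂ y))).mpr ?_ hx
  rintro _ ⟨⟨n, m, k⟩, hp, rfl⟩
  refine (Submodule.span_le (p := (suqHomog a g _).comap
    (LinearMap.mulLeft ℂ (suqMono a g (n, m, k))))).mpr ?_ hy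
  rintro _ ⟨⟨n', m', k'⟩, hr, rfl⟩
  exact suqBihomog_le_suqHomog _ _ (hrel.mul_mem_suqBihomog hq (suqMono_mem_suqBihomog hp)
    (suqMono_mem_suqBihomog hr))

end SUqRel

theorem SUqHaar.apply_eq_zero_of_mem_suqBihomog {q : ℂ} {h : A →ₗ[ℂ] ℂ}
    (hh : SUqHaar q a g h) {n p : ℤ} (hnp : ¬(n = 0 ∧ p = 0)) {x : A}
    (hx : x ∈ suqBihomog a g n p) : h x = 0 := by
  refine (Submodule.span_le (p := LinearMap.ker h)).mpr ?_ hx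
  rintro _ ⟨m, k, rfl, rfl⟩
  rw [SetLike.mem_coe, LinearMap.mem_ker, hh, if_neg (by dsimp only; omega)]

theorem suqMono_mem_suqHomog (n : ℤ) (m k : ℕ) :
    suqMono a g (n, m, k) ∈ suqHomog a g (m - k) :=
  suqBihomog_le_suqHomog n _ (suqMono_mem_suqBihomog rfl)

theorem one_mem_suqHomog : (1 : A) ∈ suqHomog a g 0 :=
  suqBihomog_le_suqHomog 0 0 one_mem_suqBihomog

theorem alpha_mem_suqHomog : a ∈ suqHomog a g 0 := by
  simpa [suqMono_eq, suqAlphaPow] using suqMono_mem_suqHomog (a := a) (g := g) 1 0 0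

theorem star_alpha_mem_suqHomog : star a ∈ suqHomog a g 0 := by
  simpa [suqMono_eq, suqAlphaPow] using suqMono_mem_suqHomog (a := a) (g := g) (-1) 0 0

theorem gamma_mem_suqHomog : g ∈ suqHomog a g 1 := by
  simpa [suqMono_eq, suqAlphaPow_zero] using suqMono_mem_suqHomog (a := a) (g := g) 0 1 0

theorem star_gamma_mem_suqHomog : star g ∈ suqHomog a g (-1) := by
  simpa [suqMono_eq, suqAlphaPow_zero] using suqMono_mem_suqHomog (a := a) (g := g) 0 0 1

theorem adjoin_eq_top_of_span_suqMono
    (hspan : Submodule.span ℂ (Set.range (suqMono a g)) = ⊤) :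
    Algebra.adjoin ℂ {a, star a, g, star g} = ⊤ := by
  set B := Algebra.adjoin ℂ ({a, star a, g, star g} : Set A)
  have hgen : ∀ y ∈ ({a, star a, g, star g} : Set A), y ∈ B :=
    fun _ hy ↦ Algebra.subset_adjoin hy
  refine eq_top_iff.mpr fun x _ ↦ (Submodule.span_le (p := Subalgebra.toSubmodule B)).mpr ?_
    (hspan ▸ Submodule.mem_top : x ∈ Submodule.span ℂ (Set.range (suqMono a g)))
  rintro _ ⟨⟨n, m, k⟩, rfl⟩
  rw [SetLike.mem_coe, Subalgebra.mem_toSubmodule]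
  have hα : suqAlphaPow a n ∈ B := by
    unfold suqAlphaPow
    split_ifs
    exacts [pow_mem (hgen a (by simp)) _, pow_mem (hgen (star a) (by simp)) _]
  exact mul_mem (mul_mem hα (pow_mem (hgen g (by simp)) m))
    (pow_mem (hgen (star g) (by simp)) k)

namespace SUqUnitaryAntipode

variable {q : ℂ} {S R : A →ₗ[ℂ] A} (hS : SUqAntipode q a g S)
  (hR : SUqUnitaryAntipode q a g S R)

include hR in
theorem apply_of_mem {p : ℤ} {x : A} (hx : x ∈ suqHomog a g p) :
    R x = unitaryAntipodeCoeff q p • S x :=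
  hR p x hx

include hS hR

theorem map_one : R 1 = 1 := by
  rw [hR.apply_of_mem one_mem_suqHomog, hS.1, unitaryAntipodeCoeff_zero, one_smul]

theorem map_alpha : R a = star a := by
  rw [hR.apply_of_mem alpha_mem_suqHomog, hS.2.1, unitaryAntipodeCoeff_zero, one_smul]

theorem map_star_alpha : R (star a) = a := by
  rw [hR.apply_of_mem star_alpha_mem_suqHomog, hS.2.2.1, unitaryAntipodeCoeff_zero, one_smul]

theorem map_gamma : R g = suqGammaPhase q • g := by
  rw [hR.apply_of_mem gamma_mem_suqHomog, hS.2.2.2.1, smul_smul, unitaryAntipodeCoeff_one_mul]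

theorem map_star_gamma (hq : q ≠ 0) : R (star g) = suqGammaPhase q • star g := by
  rw [hR.apply_of_mem star_gamma_mem_suqHomog, hS.2.2.2.2.1, smul_smul,
    unitaryAntipodeCoeff_neg_one_mul hq]

variable [StarModule ℂ A] (hrel : SUqRel q a g) (hq : q ≠ 0)
include hrel hq

theorem map_mul_of_mem {p r : ℤ} {x y : A} (hx : x ∈ suqHomog a g p)
    (hy : y ∈ suqHomog a g r) : R (x * y) = R y * R x := by
  rw [hR.apply_of_mem (hrel.mul_mem_suqHomog hq hx hy), hS.2.2.2.2.2.2 p r x hx y hy,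
    hR.apply_of_mem hy, hR.apply_of_mem hx, smul_smul, smul_mul_smul_comm,
    unitaryAntipodeCoeff_add hq, mul_assoc, ← zpow_add₀ (div_ne_zero hq (by simpa using hq)),
    add_neg_cancel, zpow_zero, mul_one, mul_comm]

variable (hspan : Submodule.span ℂ (Set.range (suqMono a g)) = ⊤)
include hspan

theorem map_mul (x y : A) : R (x * y) = R y * R x := by
  have hmono : ∀ i j,
      R (suqMono a g i * suqMono a g j) = R (suqMono a g j) * R (suqMono a g i) :=
    fun ⟨n, m, k⟩ ⟨n', m', k'⟩ ↦ hR.map_mul_of_mem hS hrel hq (suqMono_mem_suqHomog n m k)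
      (suqMono_mem_suqHomog n' m' k')
  have hleft : ∀ i, R (suqMono a g i * y) = R y * R (suqMono a g i) := fun i ↦
    LinearMap.congr_fun (LinearMap.ext_on_range hspan (f := R ∘ₗ LinearMap.mulLeft ℂ _)
      (g := LinearMap.mulRight ℂ (R (suqMono a g i)) ∘ₗ R) (hmono i)) y
  exact LinearMap.congr_fun (LinearMap.ext_on_range hspan (f := R ∘ₗ LinearMap.mulRight ℂ y)
    (g := LinearMap.mulLeft ℂ (R y) ∘ₗ R) hleft) x

theorem map_star (x : A) : R (star x) = star (R x) := by
  have hx : x ∈ Algebra.adjoin ℂ {a, star a, g, star g} :=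
    adjoin_eq_top_of_span_suqMono hspan ▸ Algebra.mem_top
  induction hx using Algebra.adjoin_induction with
  | mem x hx =>
    rcases hx with rfl | rfl | rfl | rfl <;>
      simp only [star_star, hR.map_alpha hS, hR.map_star_alpha hS, hR.map_gamma hS,
        hR.map_star_gamma hS hq, star_smul, Complex.star_def, conj_suqGammaPhase hq]
  | algebraMap r =>
    simp only [Algebra.algebraMap_eq_smul_one, star_smul, star_one, map_smul, hR.map_one hS]
  | add x y _ _ hx hy => rw [star_add, map_add, map_add, hx, hy, star_add]
  | mul x y _ _ hx hy =>
    rw [star_mul, hR.map_mul hS hrel hq hspan, hx, hy, hR.map_mul hS hrel hq hspan, star_mul]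

theorem map_map (x : A) : R (R x) = x := by
  have hx : x ∈ Algebra.adjoin ℂ {a, star a, g, star g} :=
    adjoin_eq_top_of_span_suqMono hspan ▸ Algebra.mem_top
  induction hx using Algebra.adjoin_induction with
  | mem x hx =>
    rcases hx with rfl | rfl | rfl | rfl <;>
      simp only [hR.map_alpha hS, hR.map_star_alpha hS, hR.map_gamma hS, hR.map_star_gamma hS hq,
        map_smul, smul_smul, suqGammaPhase_mul_self hq, one_smul]
  | algebraMap r =>
    simp only [Algebra.algebraMap_eq_smul_one, map_smul, hR.map_one hS]
  | add x y _ _ hx hy => rw [map_add, map_add, hx, hy]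
  | mul x y _ _ hx hy =>
    rw [hR.map_mul hS hrel hq hspan, hR.map_mul hS hrel hq hspan, hx, hy]

theorem map_suqMono (n : ℤ) (m k : ℕ) :
    R (suqMono a g (n, m, k)) =
      suqGammaPhase q ^ (m + k) • (g ^ m * star g ^ k * suqAlphaPow a (-n)) := by
  have hmul := hR.map_mul hS hrel hq hspan
  have hR1 := hR.map_one hS
  rw [suqMono_eq, hmul, hmul, map_pow_of_antimul hR1 hmul, map_pow_of_antimul hR1 hmul,
    hR.map_gamma hS, hR.map_star_gamma hS hq,
    map_suqAlphaPow_of_antimul hR1 hmul (hR.map_alpha hS) (hR.map_star_alpha hS), smul_pow,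
    smul_pow, smul_mul_assoc, smul_mul_assoc, mul_smul_comm, smul_smul, ← mul_assoc,
    ← (hrel.commute_gamma_star_gamma.pow_pow m k).eq, pow_add, mul_comm]

theorem map_suqMono_mem (n : ℤ) (m k : ℕ) :
    R (suqMono a g (n, m, k)) ∈ suqBihomog a g (-n) (m - k) := by
  rw [hR.map_suqMono hS hrel hq hspan]
  refine Submodule.smul_mem _ _ ?_
  simpa using hrel.mul_suqAlphaPow_mem hq
    (mul_star_gamma_pow_mem (hrel.mul_gamma_pow_mem one_mem_suqBihomog m) k) (-n)

theorem map_suqMono_self (m : ℕ) : R (suqMono a g (0, m, m)) = suqMono a g (0, m, m) := by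
  rw [hR.map_suqMono hS hrel hq hspan, neg_zero, ← two_mul, pow_mul, sq,
    suqGammaPhase_mul_self hq, one_pow, one_smul, suqMono_eq, suqAlphaPow_zero, mul_one,
    one_mul]

theorem haar_map {h : A →ₗ[ℂ] ℂ} (hh : SUqHaar q a g h) (x : A) : h (R x) = h x := by
  refine LinearMap.congr_fun (LinearMap.ext_on_range hspan (f := h ∘ₗ R) (g := h) ?_) x
  rintro ⟨n, m, k⟩
  rw [LinearMap.comp_apply]
  by_cases hc : n = 0 ∧ m = k
  · obtain ⟨rfl, rfl⟩ := hc
    rw [hR.map_suqMono_self hS hrel hq hspan]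
  · rw [hh.apply_eq_zero_of_mem_suqBihomog (by omega) (hR.map_suqMono_mem hS hrel hq hspan n m k),
      hh.apply_eq_zero_of_mem_suqBihomog (by omega) (suqMono_mem_suqBihomog rfl)]

end SUqUnitaryAntipode

end SUq

theorem suq_unitary_antipode_props_general {A : Type*} [Ring A] [Algebra ℂ A] [StarRing A]
    [StarModule ℂ A]
    (q : ℂ) (hq0 : 0 < ‖q‖)
    (a g : A) (hrel : SUqRel q a g) (hbasis : SUqBasis a g)
    (S : A →ₗ[ℂ] A) (hS : SUqAntipode q a g S)
    (R : A →ₗ[ℂ] A) (hR : SUqUnitaryAntipode q a g S R)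
    (h : A →ₗ[ℂ] ℂ) (hh : SUqHaar q a g h) :
    R 1 = 1 ∧
    (∀ x y : A, R (x * y) = R y * R x) ∧
    (∀ x : A, R (star x) = star (R x)) ∧
    R a = star a ∧ R (star a) = a ∧
    R g = (-(Complex.exp ((1 / 2 : ℂ) * Complex.log (q / starRingEnd ℂ q)) *
      (starRingEnd ℂ q / (‖q‖ : ℂ)))) • g ∧
    R (star g) = (-(Complex.exp ((1 / 2 : ℂ) * Complex.log (q / starRingEnd ℂ q)) *
      (starRingEnd ℂ q / (‖q‖ : ℂ)))) • star g ∧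
    (∀ x : A, R (R x) = x) ∧
    (∀ x : A, h (R x) = h x) := by
  have hq : q ≠ 0 := norm_pos_iff.mp hq0
  have hspan := hbasis.2
  exact ⟨hR.map_one hS, hR.map_mul hS hrel hq hspan, hR.map_star hS hrel hq hspan,
    hR.map_alpha hS, hR.map_star_alpha hS, hR.map_gamma hS, hR.map_star_gamma hS hq,
    hR.map_map hS hrel hq hspan, hR.haar_map hS hrel hq hspan hh⟩

/-- The unitary antipode `R := S∘τ_{i/2}∘ϑ` is unital, anti-multiplicative,
star-preserving, has the prescribed values on the generators, is involutive, and preserves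
the Haar functional. -/
theorem suq_unitary_antipode_props {A : Type*} [Ring A] [Algebra ℂ A] [StarRing A]
    [StarModule ℂ A]
    (q : ℂ) (hq0 : 0 < ‖q‖) (hq1 : ‖q‖ < 1)
    (a g : A) (hrel : SUqRel q a g) (hbasis : SUqBasis a g)
    (S : A →ₗ[ℂ] A) (hS : SUqAntipode q a g S)
    (R : A →ₗ[ℂ] A) (hR : SUqUnitaryAntipode q a g S R)
    (h : A →ₗ[ℂ] ℂ) (hh : SUqHaar q a g h) :
    R 1 = 1 ∧
    (∀ x y : A, R (x * y) = R y * R x) ∧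
    (∀ x : A, R (star x) = star (R x)) ∧
    R a = star a ∧ R (star a) = a ∧
    R g = (-(Complex.exp ((1 / 2 : ℂ) * Complex.log (q / starRingEnd ℂ q)) *
      (starRingEnd ℂ q / (‖q‖ : ℂ)))) • g ∧
    R (star g) = (-(Complex.exp ((1 / 2 : ℂ) * Complex.log (q / starRingEnd ℂ q)) *
      (starRingEnd ℂ q / (‖q‖ : ℂ)))) • star g ∧
    (∀ x : A, R (R x) = x) ∧
    (∀ x : A, h (R x) = h x) :=
  suq_unitary_antipode_props_general q hq0 a g hrel hbasis S hS R hR h hh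
end
end

section
/- Let N ≥ 1 and let u = (u_{ij}) ∈ Mat_N(𝒜) satisfy Σ_k u_{ik}(u_{jk})* = δ_{ij}·1 = Σ_k (u_{ki})*·u_{kj} for all i, j (i.e. u is a unitary matrix over 𝒜), and Δ(u_{ij}) = Σ_{k=1}^N u_{ik} ⊗ u_{kj} for all i, j (i.e. u is a corepresentation matrix). Then ε(u_{ij}) = δ_{ij} and S(u_{ij}) = (u_{ji})* for all i, j. -/
open scoped TensorProduct

noncomputable section

/-!
Unitarity makes `u` invertible with inverse `uᴴ`, so `ε(u) = 1` and `S(u) = uᴴ` follow from the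
matrix identities `u · ε(u) = u` and `S(u) · u = 1`, i.e. from `(id ⊗ ε) Δ = id` and
`m (S ⊗ id) Δ = ε(·) 1` applied to the corepresentation. Both identities hold at `1` and survive
left multiplication by a generator, which suffices since the monomials span `𝒜`.
For `id ⊗ ε` this is because it is multiplicative for the braided product: `ε` kills `𝒜_r` for
`r ≠ 0`, so no braiding factor survives. For `m (S ⊗ id)` the braiding factor of `Δ(c) · t`
cancels against the one in the braided anti-multiplicativity of `S`, as `Δ(c)` has the total
degree of `c`; what remains is `m (S ⊗ id) Δ(c) = ε(c) 1` for the four generators, which are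
exactly the defining relations.
-/

namespace TensorProduct

variable {R M N P : Type*} [CommSemiring R] [AddCommMonoid M] [Module R M]
  [AddCommMonoid N] [Module R N] [AddCommMonoid P] [Module R P]

theorem ext_of_span_range_left {ι : Type*} {v : ι → M}
    (hv : Submodule.span R (Set.range v) = ⊤) {f f' : M ⊗[R] N →ₗ[R] P}
    (h : ∀ i n, f (v i ⊗ₜ n) = f' (v i ⊗ₜ n)) : f = f' :=
  ext <| LinearMap.ext_on_range hv fun i => LinearMap.ext (h i)

theorem ext_of_span_range_right {ι : Type*} {v : ι → N}
    (hv : Submodule.span R (Set.range v) = ⊤) {f f' : M ⊗[R] N →ₗ[R] P}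
    (h : ∀ m i, f (m ⊗ₜ v i) = f' (m ⊗ₜ v i)) : f = f' :=
  ext <| LinearMap.ext fun m => LinearMap.ext_on_range hv (h m)

end TensorProduct

theorem LinearMap.eq_of_mul_left_of_span_closure {R A M : Type*} [CommSemiring R] [Semiring A]
    [Module R A] [AddCommMonoid M] [Module R M] {s : Set A}
    (hs : Submodule.span R (Submonoid.closure s : Set A) = ⊤) {F G : A →ₗ[R] M}
    (h1 : F 1 = G 1) (hmul : ∀ c ∈ s, ∀ y, F y = G y → F (c * y) = G (c * y)) : F = G := by
  refine LinearMap.ext_on hs fun x hx => ?_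
  have key : ∀ y, F y = G y → F (x * y) = G (x * y) := by
    induction hx using Submonoid.closure_induction with
    | mem c hc => exact hmul c hc
    | one => simp
    | mul c c' _ _ hc hc' =>
      intro y hy
      rw [mul_assoc]
      exact hc _ (hc' y hy)
  simpa using key 1 h1

section HopfMaps

variable {R A : Type*} [CommSemiring R] [Semiring A] [Algebra R A]

def idTensorCounit (ε : A →ₐ[R] R) : A ⊗[R] A →ₗ[R] A :=
  TensorProduct.rid R A ∘ₗ ε.toLinearMap.lTensor A

@[simp]
theorem idTensorCounit_tmul (ε : A →ₐ[R] R) (x y : A) :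
    idTensorCounit ε (x ⊗ₜ y) = ε y • x := by
  simp [idTensorCounit]

def mulAntipodeTensorId (S : A →ₗ[R] A) : A ⊗[R] A →ₗ[R] A :=
  LinearMap.mul' R A ∘ₗ S.rTensor A

@[simp]
theorem mulAntipodeTensorId_tmul (S : A →ₗ[R] A) (x y : A) :
    mulAntipodeTensorId S (x ⊗ₜ y) = S x * y :=
  rfl

end HopfMaps

namespace SUq

variable {A : Type*} [Ring A] [StarRing A] {a g : A}

theorem suqMono_mem_closure (i : ℤ × ℕ × ℕ) :
    suqMono a g i ∈ Submonoid.closure {a, g, star a, star g} := by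
  have hgen : ∀ c ∈ ({a, g, star a, star g} : Set A), ∀ n : ℕ,
      c ^ n ∈ Submonoid.closure {a, g, star a, star g} :=
    fun c hc n => pow_mem (Submonoid.subset_closure hc) n
  refine mul_mem (mul_mem ?_ (hgen g (by simp) _)) (hgen (star g) (by simp) _)
  split_ifs
  · exact hgen a (by simp) _
  · exact hgen (star a) (by simp) _

variable [Algebra ℂ A] {q : ℂ}

theorem suqMono_mem_suqHomog (i : ℤ × ℕ × ℕ) :
    suqMono a g i ∈ suqHomog a g ((i.2.1 : ℤ) - i.2.2) :=
  Submodule.subset_span ⟨i, rfl, rfl⟩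

theorem a_mem_suqHomog : a ∈ suqHomog a g 0 := by
  simpa [suqMono] using suqMono_mem_suqHomog (a := a) (g := g) (1, 0, 0)

theorem star_a_mem_suqHomog : star a ∈ suqHomog a g 0 := by
  simpa [suqMono] using suqMono_mem_suqHomog (a := a) (g := g) (-1, 0, 0)

theorem g_mem_suqHomog : g ∈ suqHomog a g 1 := by
  simpa [suqMono] using suqMono_mem_suqHomog (a := a) (g := g) (0, 1, 0)

theorem star_g_mem_suqHomog : star g ∈ suqHomog a g (-1) := by
  simpa [suqMono] using suqMono_mem_suqHomog (a := a) (g := g) (0, 0, 1)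

theorem span_closure_eq_top (hspan : Submodule.span ℂ (Set.range (suqMono a g)) = ⊤) :
    Submodule.span ℂ (Submonoid.closure {a, g, star a, star g} : Set A) = ⊤ :=
  eq_top_mono (Submodule.span_mono (Set.range_subset_iff.2 suqMono_mem_closure)) hspan

theorem counit_eq_zero_of_mem_suqHomog {ε : A →ₐ[ℂ] ℂ} (hεg : ε g = 0)
    (hεsg : ε (star g) = 0) {d : ℤ} (hd : d ≠ 0) {x : A} (hx : x ∈ suqHomog a g d) :
    ε x = 0 := by
  induction hx using Submodule.span_induction with
  | mem x hx =>
    obtain ⟨⟨n, m, k⟩, hmk, rfl⟩ := hx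
    simp only at hmk
    have : m ≠ 0 ∨ k ≠ 0 := by omega
    simp only [suqMono, map_mul, map_pow, hεg, hεsg]
    rcases this with h | h <;> simp [zero_pow h]
  | zero => simp
  | add x y _ _ hx hy => simp [hx, hy]
  | smul c x _ hx => simp [hx]

theorem counit_star_a (hrel : SUqRel q a g) {ε : A →ₐ[ℂ] ℂ} (hεa : ε a = 1) (hεg : ε g = 0) :
    ε (star a) = 1 := by
  simpa [hεa, hεg] using congrArg ε hrel.1

theorem counit_star_g (hrel : SUqRel q a g) (hq : q ≠ 1) {ε : A →ₐ[ℂ] ℂ} (hεa : ε a = 1) :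
    ε (star g) = 0 := by
  have h : ε (star g) = q * ε (star g) := by simpa [hεa] using congrArg ε hrel.2.2.2.2
  have : (1 - q) * ε (star g) = 0 := by linear_combination h
  exact (mul_eq_zero.1 this).resolve_left (sub_ne_zero.2 hq.symm)

variable {μ : A ⊗[ℂ] A →ₗ[ℂ] A ⊗[ℂ] A →ₗ[ℂ] A ⊗[ℂ] A} {Δ : A →ₗ[ℂ] A ⊗[ℂ] A}
  {S : A →ₗ[ℂ] A} {ε : A →ₐ[ℂ] ℂ}

theorem idTensorCounit_braidedMul_tmul (hμ : SUqBraidedMul q a g μ) (hεg : ε g = 0)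
    (hεsg : ε (star g) = 0) (x w : A) {r s : ℤ} {y z : A} (hy : y ∈ suqHomog a g r)
    (hz : z ∈ suqHomog a g s) :
    idTensorCounit ε (μ (x ⊗ₜ y) (z ⊗ₜ w)) =
      idTensorCounit ε (x ⊗ₜ y) * idTensorCounit ε (z ⊗ₜ w) := by
  rw [hμ x w r s y hy z hz]
  by_cases hr : r = 0
  · subst hr
    simp [smul_smul, mul_comm]
  · simp [counit_eq_zero_of_mem_suqHomog hεg hεsg hr hy]

theorem idTensorCounit_braidedMul (hspan : Submodule.span ℂ (Set.range (suqMono a g)) = ⊤)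
    (hμ : SUqBraidedMul q a g μ) (hεg : ε g = 0) (hεsg : ε (star g) = 0)
    (t t' : A ⊗[ℂ] A) :
    idTensorCounit ε (μ t t') = idTensorCounit ε t * idTensorCounit ε t' := by
  have hleft : ∀ x i, idTensorCounit ε ∘ₗ μ (x ⊗ₜ suqMono a g i) =
      LinearMap.mulLeft ℂ (idTensorCounit ε (x ⊗ₜ suqMono a g i)) ∘ₗ idTensorCounit ε :=
    fun x i => TensorProduct.ext_of_span_range_left hspan fun j w =>
      idTensorCounit_braidedMul_tmul hμ hεg hεsg x w (suqMono_mem_suqHomog i)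
        (suqMono_mem_suqHomog j)
  have hright : idTensorCounit ε ∘ₗ μ.flip t' =
      LinearMap.mulRight ℂ (idTensorCounit ε t') ∘ₗ idTensorCounit ε :=
    TensorProduct.ext_of_span_range_right hspan fun x i => LinearMap.congr_fun (hleft x i) t'
  exact LinearMap.congr_fun hright t

theorem idTensorCounit_comul (hq : q ≠ 1) (hrel : SUqRel q a g)
    (hspan : Submodule.span ℂ (Set.range (suqMono a g)) = ⊤) (hμ : SUqBraidedMul q a g μ)
    (hΔ : SUqComul q a g μ Δ) (hεa : ε a = 1) (hεg : ε g = 0) (x : A) :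
    idTensorCounit ε (Δ x) = x := by
  have hεsa := counit_star_a hrel hεa hεg
  have hεsg := counit_star_g hrel hq hεa
  obtain ⟨hΔ1, hΔmul, hΔa, hΔg, hΔsa, hΔsg⟩ := hΔ
  suffices idTensorCounit ε ∘ₗ Δ = LinearMap.id from LinearMap.congr_fun this x
  refine LinearMap.eq_of_mul_left_of_span_closure (span_closure_eq_top hspan)
    (by simp [hΔ1]) fun c hc y hy => ?_
  have hc' : idTensorCounit ε (Δ c) = c := by
    simp only [Set.mem_insert_iff, Set.mem_singleton_iff] at hc
    rcases hc with rfl | rfl | rfl | rfl <;> simp [*]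
  simp only [LinearMap.comp_apply, LinearMap.id_apply] at hy ⊢
  rw [hΔmul, idTensorCounit_braidedMul hspan hμ hεg hεsg, hc', hy]

theorem mulAntipodeTensorId_comul_a (hrel : SUqRel q a g) (hq : q ≠ 0)
    (hS : SUqAntipode q a g S) (hΔ : SUqComul q a g μ Δ) :
    mulAntipodeTensorId S (Δ a) = 1 := by
  simp [hΔ.2.2.1, hS.2.1, hS.2.2.2.2.1, smul_smul, hq, hrel.1]

theorem mulAntipodeTensorId_comul_g (hrel : SUqRel q a g) (hS : SUqAntipode q a g S)
    (hΔ : SUqComul q a g μ Δ) :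
    mulAntipodeTensorId S (Δ g) = 0 := by
  simp [hΔ.2.2.2.1, hS.2.2.1, hS.2.2.2.1, hrel.2.2.2.1]

theorem mulAntipodeTensorId_comul_star_a (hrel : SUqRel q a g) (hS : SUqAntipode q a g S)
    (hΔ : SUqComul q a g μ Δ) :
    mulAntipodeTensorId S (Δ (star a)) = 1 := by
  simp only [hΔ.2.2.2.2.1, map_sub, map_smul, mulAntipodeTensorId_tmul, hS.2.2.1, hS.2.2.2.1]
  rw [smul_mul_assoc, smul_smul, mul_neg, Complex.mul_conj', neg_smul, sub_neg_eq_add,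
    hrel.2.2.1, hrel.2.1]

theorem mulAntipodeTensorId_comul_star_g [StarModule ℂ A] (hrel : SUqRel q a g) (hq : q ≠ 0)
    (hS : SUqAntipode q a g S) (hΔ : SUqComul q a g μ Δ) :
    mulAntipodeTensorId S (Δ (star g)) = 0 := by
  have hstar : star g * star a = q • (star a * star g) := by
    simpa using congrArg star hrel.2.2.2.1
  simp [hΔ.2.2.2.2.2, hS.2.1, hS.2.2.2.2.1, hstar, smul_smul, hq]

variable (a g) in
def suqTensorHomog (d : ℤ) : Submodule ℂ (A ⊗[ℂ] A) :=
  Submodule.span ℂ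
    {t | ∃ p r : ℤ, p + r = d ∧ ∃ x ∈ suqHomog a g p, ∃ y ∈ suqHomog a g r, t = x ⊗ₜ y}

theorem tmul_mem_suqTensorHomog {p r d : ℤ} (hd : p + r = d) {x y : A}
    (hx : x ∈ suqHomog a g p) (hy : y ∈ suqHomog a g r) :
    x ⊗ₜ y ∈ suqTensorHomog a g d :=
  Submodule.subset_span ⟨p, r, hd, x, hx, y, hy, rfl⟩

theorem mulAntipodeTensorId_braidedMul_tmul (hq : q ≠ 0) (hS : SUqAntipode q a g S)
    (hμ : SUqBraidedMul q a g μ) {p r s : ℤ} {x y z : A} (hx : x ∈ suqHomog a g p)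
    (hy : y ∈ suqHomog a g r) (hz : z ∈ suqHomog a g s) (w : A) :
    mulAntipodeTensorId S (μ (x ⊗ₜ y) (z ⊗ₜ w)) =
      (q / starRingEnd ℂ q) ^ (-((p + r) * s)) • (S z * mulAntipodeTensorId S (x ⊗ₜ y) * w) := by
  have hζ : q / starRingEnd ℂ q ≠ 0 := div_ne_zero hq (by simpa using hq)
  rw [hμ x w r s y hy z hz, map_smul, mulAntipodeTensorId_tmul, mulAntipodeTensorId_tmul,
    hS.2.2.2.2.2.2 p s x hx z hz, smul_mul_assoc, smul_smul, ← zpow_add₀ hζ]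
  congr 1
  · ring_nf
  · noncomm_ring

theorem mulAntipodeTensorId_braidedMul_of_mem (hq : q ≠ 0) (hS : SUqAntipode q a g S)
    (hμ : SUqBraidedMul q a g μ) {d s : ℤ} {t : A ⊗[ℂ] A} (ht : t ∈ suqTensorHomog a g d)
    {z : A} (hz : z ∈ suqHomog a g s) (w : A) :
    mulAntipodeTensorId S (μ t (z ⊗ₜ w)) =
      (q / starRingEnd ℂ q) ^ (-(d * s)) • (S z * mulAntipodeTensorId S t * w) := by
  induction ht using Submodule.span_induction with
  | mem t ht =>
    obtain ⟨p, r, rfl, x, hx, y, hy, rfl⟩ := ht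
    exact mulAntipodeTensorId_braidedMul_tmul hq hS hμ hx hy hz w
  | zero => simp
  | add t t' _ _ h h' => simp [h, h', mul_add, add_mul]
  | smul c t _ h => simp [h, smul_comm c]

theorem mulAntipodeTensorId_braidedMul_comul (hq : q ≠ 0) (hS : SUqAntipode q a g S)
    (hμ : SUqBraidedMul q a g μ) (hspan : Submodule.span ℂ (Set.range (suqMono a g)) = ⊤)
    (hεg : ε g = 0) (hεsg : ε (star g) = 0) {d : ℤ} {c : A} (hc : c ∈ suqHomog a g d)
    (hΔc : Δ c ∈ suqTensorHomog a g d) (hSc : mulAntipodeTensorId S (Δ c) = ε c • 1)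
    (t : A ⊗[ℂ] A) :
    mulAntipodeTensorId S (μ (Δ c) t) = ε c • mulAntipodeTensorId S t := by
  suffices mulAntipodeTensorId S ∘ₗ μ (Δ c) = ε c • mulAntipodeTensorId S from
    LinearMap.congr_fun this t
  refine TensorProduct.ext_of_span_range_left hspan fun i w => ?_
  rw [LinearMap.comp_apply, mulAntipodeTensorId_braidedMul_of_mem hq hS hμ hΔc
    (suqMono_mem_suqHomog i), hSc]
  by_cases hd : d = 0
  · simp [hd]
  · simp [counit_eq_zero_of_mem_suqHomog hεg hεsg hd hc]

theorem exists_suqHomog_of_mem_generators [StarModule ℂ A] (hq0 : q ≠ 0) (hq1 : q ≠ 1)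
    (hrel : SUqRel q a g) (hΔ : SUqComul q a g μ Δ) (hS : SUqAntipode q a g S)
    (hεa : ε a = 1) (hεg : ε g = 0) {c : A} (hc : c ∈ ({a, g, star a, star g} : Set A)) :
    ∃ d, c ∈ suqHomog a g d ∧ Δ c ∈ suqTensorHomog a g d ∧
      mulAntipodeTensorId S (Δ c) = ε c • 1 := by
  have hεsa := counit_star_a hrel hεa hεg
  have hεsg := counit_star_g hrel hq1 hεa
  simp only [Set.mem_insert_iff, Set.mem_singleton_iff] at hc
  rcases hc with rfl | rfl | rfl | rfl
  · refine ⟨0, a_mem_suqHomog, ?_, by simp [mulAntipodeTensorId_comul_a hrel hq0 hS hΔ, hεa]⟩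
    rw [hΔ.2.2.1]
    exact sub_mem (tmul_mem_suqTensorHomog (by norm_num) a_mem_suqHomog a_mem_suqHomog)
      (Submodule.smul_mem _ _ (tmul_mem_suqTensorHomog (by norm_num) star_g_mem_suqHomog
        g_mem_suqHomog))
  · refine ⟨1, g_mem_suqHomog, ?_, by simp [mulAntipodeTensorId_comul_g hrel hS hΔ, hεg]⟩
    rw [hΔ.2.2.2.1]
    exact add_mem (tmul_mem_suqTensorHomog (by norm_num) g_mem_suqHomog a_mem_suqHomog)
      (tmul_mem_suqTensorHomog (by norm_num) star_a_mem_suqHomog g_mem_suqHomog)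
  · refine ⟨0, star_a_mem_suqHomog, ?_,
      by simp [mulAntipodeTensorId_comul_star_a hrel hS hΔ, hεsa]⟩
    rw [hΔ.2.2.2.2.1]
    exact sub_mem
      (tmul_mem_suqTensorHomog (by norm_num) star_a_mem_suqHomog star_a_mem_suqHomog)
      (Submodule.smul_mem _ _ (tmul_mem_suqTensorHomog (by norm_num) g_mem_suqHomog
        star_g_mem_suqHomog))
  · refine ⟨-1, star_g_mem_suqHomog, ?_,
      by simp [mulAntipodeTensorId_comul_star_g hrel hq0 hS hΔ, hεsg]⟩
    rw [hΔ.2.2.2.2.2]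
    exact add_mem
      (tmul_mem_suqTensorHomog (by norm_num) star_g_mem_suqHomog star_a_mem_suqHomog)
      (tmul_mem_suqTensorHomog (by norm_num) a_mem_suqHomog star_g_mem_suqHomog)

theorem mulAntipodeTensorId_comul [StarModule ℂ A] (hq0 : q ≠ 0) (hq1 : q ≠ 1)
    (hrel : SUqRel q a g) (hspan : Submodule.span ℂ (Set.range (suqMono a g)) = ⊤)
    (hμ : SUqBraidedMul q a g μ) (hΔ : SUqComul q a g μ Δ) (hS : SUqAntipode q a g S)
    (hεa : ε a = 1) (hεg : ε g = 0) (x : A) :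
    mulAntipodeTensorId S (Δ x) = ε x • 1 := by
  have hεsg := counit_star_g hrel hq1 hεa
  suffices mulAntipodeTensorId S ∘ₗ Δ = ε.toLinearMap.smulRight 1 from
    LinearMap.congr_fun this x
  refine LinearMap.eq_of_mul_left_of_span_closure (span_closure_eq_top hspan)
    (by simp [hΔ.1, hS.1]) fun c hc y hy => ?_
  obtain ⟨d, hcd, hΔc, hSc⟩ :=
    exists_suqHomog_of_mem_generators hq0 hq1 hrel hΔ hS hεa hεg hc
  simp only [LinearMap.comp_apply, LinearMap.smulRight_apply, AlgHom.toLinearMap_apply] at hy ⊢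
  rw [hΔ.2.1, mulAntipodeTensorId_braidedMul_comul hq0 hS hμ hspan hεg hεsg hcd hΔc hSc, hy,
    smul_smul, map_mul]

end SUq

open SUq
open scoped Matrix

theorem suq_corep_counit_antipode_general {A : Type*} [Ring A] [Algebra ℂ A] [StarRing A]
    [StarModule ℂ A]
    (q : ℂ) (hq0 : 0 < ‖q‖) (hq1 : ‖q‖ < 1)
    (a g : A) (hrel : SUqRel q a g) (hbasis : SUqBasis a g)
    (μ : A ⊗[ℂ] A →ₗ[ℂ] A ⊗[ℂ] A →ₗ[ℂ] A ⊗[ℂ] A) (hμ : SUqBraidedMul q a g μ)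
    (Δ : A →ₗ[ℂ] A ⊗[ℂ] A) (hΔ : SUqComul q a g μ Δ)
    (S : A →ₗ[ℂ] A) (hS : SUqAntipode q a g S)
    (ε : A →ₐ[ℂ] ℂ) (hεa : ε a = 1) (hεg : ε g = 0)
    (N : ℕ) (u : Matrix (Fin N) (Fin N) A)
    (hu1 : ∀ i j : Fin N, ∑ k : Fin N, u i k * star (u j k) = if i = j then 1 else 0)
    (hu2 : ∀ i j : Fin N, ∑ k : Fin N, star (u k i) * u k j = if i = j then 1 else 0)
    (hcorep : ∀ i j : Fin N, Δ (u i j) = ∑ k : Fin N, (u i k) ⊗ₜ[ℂ] (u k j)) :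
    ∀ i j : Fin N,
      ε (u i j) = (if i = j then 1 else 0) ∧ S (u i j) = star (u j i) := by
  have hq0 : q ≠ 0 := norm_pos_iff.1 hq0
  have hq1 : q ≠ 1 := by rintro rfl; simp at hq1
  have hone : (1 : A) ≠ 0 := by simpa [suqMono] using hbasis.1.ne_zero (0, 0, 0)
  have huuH : u * uᴴ = 1 := by
    ext i j; simpa [Matrix.mul_apply, Matrix.one_apply] using hu1 i j
  have huHu : uᴴ * u = 1 := by
    ext i j; simpa [Matrix.mul_apply, Matrix.one_apply] using hu2 i j
  have hunit : IsUnit u := ⟨⟨u, uᴴ, huuH, huHu⟩, rfl⟩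
  have hcounit : u * u.map (fun x => ε x • (1 : A)) = u := by
    ext i j
    conv_rhs => rw [← idTensorCounit_comul hq1 hrel hbasis.2 hμ hΔ hεa hεg (u i j), hcorep]
    simp [Matrix.mul_apply]
  have hε : ∀ i j, ε (u i j) = if i = j then 1 else 0 := fun i j =>
    smul_left_injective ℂ hone <| by
      simpa [Matrix.one_apply, ite_smul] using
        Matrix.ext_iff.2 (hunit.mul_eq_left.1 hcounit) i j
  have hantipode : u.map S * u = 1 := by
    ext i j
    have h := mulAntipodeTensorId_comul hq0 hq1 hrel hbasis.2 hμ hΔ hS hεa hεg (u i j)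
    rw [hcorep, hε] at h
    simpa [Matrix.mul_apply, Matrix.one_apply] using h
  exact fun i j => ⟨hε i j, by simpa using Matrix.ext_iff.2 (left_inv_eq_right_inv hantipode huuH) i j⟩

/-- If `u ∈ Mat_N(𝒜)` is a unitary corepresentation matrix
(`Δ(u_{ij}) = Σ_k u_{ik} ⊗ u_{kj}`), then `ε(u_{ij}) = δ_{ij}` and `S(u_{ij}) = (u_{ji})*`. -/
theorem suq_corep_counit_antipode {A : Type*} [Ring A] [Algebra ℂ A] [StarRing A]
    [StarModule ℂ A]
    (q : ℂ) (hq0 : 0 < ‖q‖) (hq1 : ‖q‖ < 1)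
    (a g : A) (hrel : SUqRel q a g) (hbasis : SUqBasis a g)
    (μ : A ⊗[ℂ] A →ₗ[ℂ] A ⊗[ℂ] A →ₗ[ℂ] A ⊗[ℂ] A) (hμ : SUqBraidedMul q a g μ)
    (Δ : A →ₗ[ℂ] A ⊗[ℂ] A) (hΔ : SUqComul q a g μ Δ)
    (S : A →ₗ[ℂ] A) (hS : SUqAntipode q a g S)
    (ε : A →ₐ[ℂ] ℂ) (hεa : ε a = 1) (hεg : ε g = 0)
    (N : ℕ) (hN : 1 ≤ N) (u : Matrix (Fin N) (Fin N) A)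
    (hu1 : ∀ i j : Fin N, ∑ k : Fin N, u i k * star (u j k) = if i = j then 1 else 0)
    (hu2 : ∀ i j : Fin N, ∑ k : Fin N, star (u k i) * u k j = if i = j then 1 else 0)
    (hcorep : ∀ i j : Fin N, Δ (u i j) = ∑ k : Fin N, (u i k) ⊗ₜ[ℂ] (u k j)) :
    ∀ i j : Fin N,
      ε (u i j) = (if i = j then 1 else 0) ∧ S (u i j) = star (u j i) :=
  suq_corep_counit_antipode_general q hq0 hq1 a g hrel hbasis μ hμ Δ hΔ S hS ε hεa hεg N u hu1 hu2
    hcorep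
end
end

section
/- Let ζ ∈ ℂ with |ζ| = 1 and suppose ζ is not a root of unity (ζ^j ≠ 1 for every integer j ≥ 1). Then there exist a sequence (n_k)_{k≥1} of positive integers and a sequence (m_l)_{l≥1} of odd positive integers such that: for every fixed k, ζ^{n_k·m_l} → 1 as l → ∞, and for every fixed l, ζ^{n_k·m_l} → −1 as k → ∞. In particular the iterated limits lim_k lim_l ζ^{n_k m_l} = 1 and lim_l lim_k ζ^{n_k m_l} = −1 both exist and are different. -/
/-!
A point of the unit circle that is not a root of unity generates a dense subgroup (an irrational
rotation), and in the compact group `Circle` the closures of its natural and of its integer powers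
agree, so every point of the circle is a limit of some sequence `ζ ^ φ k`. Taking
`ζ ^ a k → -ζ⁻¹` and `(ζ ^ 2) ^ b l → ζ⁻¹` gives `ζ ^ n k → -1` for `n k = a k + 1` and
`ζ ^ m l → 1` for the odd `m l = 2 * b l + 1`. Continuity of `z ↦ z ^ n` then yields both
limits, the second one because `(-1) ^ m l = -1`.
-/

open Filter Topology

namespace Circle

theorem denseRange_zpow_of_not_isOfFinOrder {u : Circle} (hu : ¬IsOfFinOrder u) :
    DenseRange (u ^ · : ℤ → Circle) := by
  let e := AddCircle.homeomorphCircle (T := 1) one_ne_zero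
  have he : ∀ y, e y = AddCircle.toCircle y := AddCircle.homeomorphCircle_apply one_ne_zero
  obtain ⟨x, rfl⟩ := e.surjective u
  have hx : addOrderOf x = 0 := by
    refine addOrderOf_eq_zero_iff.2 fun hx => hu ?_
    obtain ⟨n, hn, hnx⟩ := isOfFinAddOrder_iff_nsmul_eq_zero.1 hx
    exact isOfFinOrder_iff_pow_eq_one.2
      ⟨n, hn, by rw [he, ← AddCircle.toCircle_nsmul, hnx, AddCircle.toCircle_zero]⟩
  have hcomp : (e x ^ · : ℤ → Circle) = e ∘ (· • x) := by
    ext1 n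
    simp only [Function.comp_apply, he, AddCircle.toCircle_zsmul]
  rw [hcomp]
  exact e.surjective.denseRange.comp (AddCircle.denseRange_zsmul_iff.2 hx) e.continuous

theorem exists_tendsto_pow_of_not_isOfFinOrder {u : Circle} (hu : ¬IsOfFinOrder u) (w : Circle) :
    ∃ φ : ℕ → ℕ, Tendsto (fun k => u ^ φ k) atTop (𝓝 w) := by
  have hw : MapClusterPt w atTop (u ^ · : ℕ → Circle) :=
    ((mapClusterPt_atTop_pow_tfae w u).out 0 3).2 (denseRange_zpow_of_not_isOfFinOrder hu w)
  obtain ⟨φ, -, hφ⟩ := hw.tendsto_subseq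
  exact ⟨φ, hφ⟩

end Circle

theorem Complex.exists_tendsto_pow_of_not_isOfFinOrder {ζ : ℂ} (hζ : ‖ζ‖ = 1)
    (hζ_order : ¬IsOfFinOrder ζ) {w : ℂ} (hw : ‖w‖ = 1) :
    ∃ φ : ℕ → ℕ, Tendsto (fun k => ζ ^ φ k) atTop (𝓝 w) := by
  let u : Circle := ⟨ζ, mem_sphere_zero_iff_norm.2 hζ⟩
  have hu : ¬IsOfFinOrder u := fun h => hζ_order (Circle.coeHom.isOfFinOrder h)
  obtain ⟨φ, hφ⟩ :=
    Circle.exists_tendsto_pow_of_not_isOfFinOrder hu ⟨w, mem_sphere_zero_iff_norm.2 hw⟩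
  exact ⟨φ, (continuous_subtype_val.tendsto _).comp hφ⟩

/-- If `ζ ∈ ℂ` has modulus `1` and is not a root of unity, then there are a
sequence of positive integers `n_k` and a sequence of odd positive integers `m_l` such that
`ζ^{n_k m_l} → 1` as `l → ∞` (for each fixed `k`) and `ζ^{n_k m_l} → -1` as `k → ∞` (for each
fixed `l`); in particular the two iterated limits exist and are different. -/
theorem zeta_iterated_limits (ζ : ℂ) (hζ : ‖ζ‖ = 1)
    (hroot : ∀ j : ℕ, 1 ≤ j → ζ ^ j ≠ 1) :
    ∃ (n m : ℕ → ℕ),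
      (∀ k, 0 < n k) ∧ (∀ l, 0 < m l ∧ Odd (m l)) ∧
      (∀ k, Filter.Tendsto (fun l => ζ ^ (n k * m l)) Filter.atTop (nhds 1)) ∧
      (∀ l, Filter.Tendsto (fun k => ζ ^ (n k * m l)) Filter.atTop (nhds (-1))) := by
  have hζ_order : ¬IsOfFinOrder ζ := fun h =>
    let ⟨j, hj, hζj⟩ := isOfFinOrder_iff_pow_eq_one.1 h
    hroot j hj hζj
  have hζ_ne : ζ ≠ 0 := norm_ne_zero_iff.1 (by rw [hζ]; exact one_ne_zero)
  obtain ⟨a, ha⟩ := Complex.exists_tendsto_pow_of_not_isOfFinOrder hζ hζ_order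
    (w := -ζ⁻¹) (by simp [hζ])
  obtain ⟨b, hb⟩ := Complex.exists_tendsto_pow_of_not_isOfFinOrder (ζ := ζ ^ 2)
    (by simp [hζ]) (fun h => hζ_order (h.of_pow two_ne_zero)) (w := ζ⁻¹) (by simp [hζ])
  have hn : Tendsto (fun k => ζ ^ (a k + 1)) atTop (𝓝 (-1)) := by
    simpa [pow_succ, hζ_ne] using ha.mul_const ζ
  have hm : Tendsto (fun l => ζ ^ (2 * b l + 1)) atTop (𝓝 1) := by
    simpa [pow_succ, pow_mul, hζ_ne] using hb.mul_const ζ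
  refine ⟨fun k => a k + 1, fun l => 2 * b l + 1, fun k => Nat.succ_pos _,
    fun l => ⟨Nat.succ_pos _, odd_two_mul_add_one _⟩, fun k => ?_, fun l => ?_⟩
  · simpa [pow_mul'] using hm.pow (a k + 1)
  · simpa [pow_mul, (odd_two_mul_add_one (b l)).neg_one_pow] using hn.pow (2 * b l + 1)
end
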